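/- arXiv:2306.02973 — 2 statements merged into one kernel-verified Lean document; each statement's English description precedes it below -/
import Mathlib

section
/- There exist ε_0 > 0 and C > 0 such that for every ε ∈ (0, ε_0] and every u ∈ ℝ one has |f_ε′(u)| ≤ C |u|^{p−1}, where f_ε′ is the derivative of f_ε. -/
open Real

/-- The critical exponent `p = (n+2)/(n-2)`. -/
noncomputable def pCrit (n : ℕ) : ℝ := ((n : ℝ) + 2) / ((n : ℝ) - 2)

/-- The non-power nonlinearity `f_ε(u) = |u|^{p-1} u / (ln(e+|u|))^ε`;
in particular `f_0(u) = |u|^{p-1} u`. -/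
noncomputable def fEps (n : ℕ) (ε u : ℝ) : ℝ :=
  |u| ^ (pCrit n - 1) * u / (Real.log (Real.exp 1 + |u|)) ^ ε

lemma one_lt_pCrit {n : ℕ} (hn : 3 ≤ n) : 1 < pCrit n := by
  have hn3 : (3:ℝ) ≤ (n:ℝ) := by exact_mod_cast hn
  rw [pCrit, lt_div_iff₀ (by linarith)]
  linarith

lemma fEps_zero (n : ℕ) (ε : ℝ) : fEps n ε 0 = 0 := by
  simp [fEps]

lemma one_le_logterm (u : ℝ) (hu : 0 ≤ u) : 1 ≤ Real.log (Real.exp 1 + u) := by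
  have h : Real.exp 1 ≤ Real.exp 1 + u := by linarith
  calc (1:ℝ) = Real.log (Real.exp 1) := (Real.log_exp 1).symm
    _ ≤ Real.log (Real.exp 1 + u) := Real.log_le_log (Real.exp_pos 1) h

lemma arith_bound {p A Dv E ε q : ℝ} (hp : 1 < p) (hA0 : 0 < A) (hDv1 : 1 ≤ Dv)
    (hE0 : 0 < E) (hED : E ≤ Dv) (hε0 : 0 ≤ ε) (hε1 : ε ≤ 1)
    (hq0 : 0 ≤ q) (hq1 : q ≤ 1) :
    |(p * A * Dv - A * ε * E * q) / Dv ^ 2| ≤ (p + 1) * A := by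
  have hDv0 : 0 < Dv := lt_of_lt_of_le one_pos hDv1
  have hp0 : (0:ℝ) < p := by linarith
  have hT : A * ε * E * q ≤ A * Dv ^ 2 := by
    have ha : ε * E ≤ Dv := by nlinarith [mul_nonneg (sub_nonneg.2 hε1) hE0.le]
    have h2 : ε * E * q ≤ Dv := by
      nlinarith [mul_nonneg (mul_nonneg hε0 hE0.le) (sub_nonneg.2 hq1)]
    calc A * ε * E * q = A * (ε * E * q) := by ring
      _ ≤ A * Dv := mul_le_mul_of_nonneg_left h2 hA0.le
      _ ≤ A * Dv ^ 2 := by nlinarith [mul_nonneg (mul_nonneg hA0.le hDv0.le) (sub_nonneg.2 hDv1)]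
  have hT0 : 0 ≤ A * ε * E * q := by positivity
  have hPADv : 0 ≤ p * A * Dv := by positivity
  have h5 : A * Dv ^ 2 ≤ (p + 1) * A * Dv ^ 2 := by
    nlinarith [mul_nonneg (mul_nonneg hp0.le hA0.le) (sq_nonneg Dv)]
  have h6 : p * A * Dv ≤ p * A * Dv ^ 2 := by
    nlinarith [mul_nonneg (mul_nonneg (mul_nonneg hp0.le hA0.le) hDv0.le) (sub_nonneg.2 hDv1)]
  have h7 : p * A * Dv ^ 2 ≤ (p + 1) * A * Dv ^ 2 := by
    nlinarith [mul_nonneg hA0.le (sq_nonneg Dv)]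
  have hN : |p * A * Dv - A * ε * E * q| ≤ (p + 1) * A * Dv ^ 2 := by
    rw [abs_le]
    constructor
    · linarith
    · linarith
  rw [abs_div, abs_of_pos (pow_pos hDv0 2), div_le_iff₀ (pow_pos hDv0 2)]
  exact hN

/-- derivative bound at positive points -/
lemma abs_deriv_fEps_le_pos {n : ℕ} (hn : 3 ≤ n) {ε : ℝ} (hε : 0 < ε) (hε1 : ε ≤ 1)
    {u : ℝ} (hu : 0 < u) :
    |deriv (fEps n ε) u| ≤ (pCrit n + 1) * u ^ (pCrit n - 1) := by
  have hp := one_lt_pCrit hn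
  set p := pCrit n with hpdef
  set m : ℝ := Real.exp 1 + u with hm
  have hm0 : 0 < m := by positivity
  set L : ℝ := Real.log m with hL
  have hL1 : 1 ≤ L := one_le_logterm u hu.le
  have hL0 : 0 < L := lt_of_lt_of_le one_pos hL1
  set Dv : ℝ := L ^ ε with hDv
  have hDv1 : 1 ≤ Dv := Real.one_le_rpow hL1 hε.le
  have hDv0 : 0 < Dv := lt_of_lt_of_le one_pos hDv1
  set E : ℝ := L ^ (ε - 1) with hE
  have hE0 : 0 < E := Real.rpow_pos_of_pos hL0 _
  have hED : E ≤ Dv := Real.rpow_le_rpow_of_exponent_le hL1 (by linarith)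
  -- build HasDerivAt for the smooth version
  have hg : HasDerivAt (fun x : ℝ => x ^ (p - 1) * x)
      ((p - 1) * u ^ (p - 1 - 1) * u + u ^ (p - 1) * 1) u :=
    (Real.hasDerivAt_rpow_const (Or.inl hu.ne')).mul (hasDerivAt_id u)
  have hbase : HasDerivAt (fun x : ℝ => Real.exp 1 + x) 1 u :=
    (hasDerivAt_id u).const_add (Real.exp 1)
  have hlog : HasDerivAt (fun x : ℝ => Real.log (Real.exp 1 + x)) (1 / m) u :=
    hbase.log hm0.ne'
  have hD : HasDerivAt (fun x : ℝ => (Real.log (Real.exp 1 + x)) ^ ε)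
      (1 / m * ε * L ^ (ε - 1)) u := hlog.rpow_const (Or.inl hL0.ne')
  have hdiv : HasDerivAt (fun x : ℝ => x ^ (p - 1) * x / (Real.log (Real.exp 1 + x)) ^ ε)
      ((((p - 1) * u ^ (p - 1 - 1) * u + u ^ (p - 1) * 1) * Dv
        - u ^ (p - 1) * u * (1 / m * ε * E)) / Dv ^ 2) u := by
    exact hg.div hD hDv0.ne'
  have heq : fEps n ε =ᶠ[nhds u] fun x : ℝ =>
      x ^ (p - 1) * x / (Real.log (Real.exp 1 + x)) ^ ε := by
    filter_upwards [eventually_gt_nhds hu] with x hx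
    simp [fEps, abs_of_pos hx, hpdef]
  have hf : HasDerivAt (fEps n ε)
      ((((p - 1) * u ^ (p - 1 - 1) * u + u ^ (p - 1) * 1) * Dv
        - u ^ (p - 1) * u * (1 / m * ε * E)) / Dv ^ 2) u :=
    hdiv.congr_of_eventuallyEq heq
  rw [hf.deriv]
  set A : ℝ := u ^ (p - 1) with hA
  have hA0 : 0 < A := Real.rpow_pos_of_pos hu _
  have hpow : u ^ (p - 1 - 1) * u = A := by
    rw [hA, ← Real.rpow_add_one hu.ne' (p - 1 - 1)]
    ring_nf
  have hq0 : 0 ≤ u / m := by positivity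
  have hq1 : u / m ≤ 1 := by
    rw [div_le_one hm0]
    have := Real.exp_pos 1
    linarith [hm]
  -- rewrite numerator
  have hnum : ((p - 1) * u ^ (p - 1 - 1) * u + u ^ (p - 1) * 1) * Dv
      - u ^ (p - 1) * u * (1 / m * ε * E) = p * A * Dv - A * ε * E * (u / m) := by
    have h1 : (p - 1) * u ^ (p - 1 - 1) * u = (p - 1) * A := by
      rw [mul_assoc, hpow]
    rw [h1, ← hA]
    ring
  rw [hnum]
  exact arith_bound hp hA0 hDv1 hE0 hED hε.le hε1 hq0 hq1

lemma hasDerivAt_fEps_zero {n : ℕ} (hn : 3 ≤ n) {ε : ℝ} (hε : 0 < ε) :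
    HasDerivAt (fEps n ε) 0 0 := by
  have hp := one_lt_pCrit hn
  rw [hasDerivAt_iff_tendsto_slope]
  apply squeeze_zero_norm' (a := fun x : ℝ => |x| ^ (pCrit n - 1))
  · filter_upwards [self_mem_nhdsWithin] with x hx
    have hx0 : x ≠ 0 := hx
    have hL1 : 1 ≤ Real.log (Real.exp 1 + |x|) := one_le_logterm _ (abs_nonneg x)
    have hD1 : 1 ≤ (Real.log (Real.exp 1 + |x|)) ^ ε := Real.one_le_rpow hL1 hε.le
    have hD0 : (0:ℝ) < (Real.log (Real.exp 1 + |x|)) ^ ε := lt_of_lt_of_le one_pos hD1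
    have hslope : slope (fEps n ε) 0 x
        = |x| ^ (pCrit n - 1) / (Real.log (Real.exp 1 + |x|)) ^ ε := by
      rw [slope_def_field, fEps_zero, fEps]
      field_simp
      ring
    rw [hslope, Real.norm_eq_abs, abs_div, abs_of_pos hD0,
      abs_of_nonneg (Real.rpow_nonneg (abs_nonneg x) _)]
    exact div_le_self (Real.rpow_nonneg (abs_nonneg x) _) hD1
  · have hc : ContinuousAt (fun x : ℝ => |x| ^ (pCrit n - 1)) 0 := by
      exact (Real.continuousAt_rpow_const (|(0:ℝ)|) (pCrit n - 1)
        (Or.inr (by linarith))).comp continuous_abs.continuousAt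
    have h0 : |(0:ℝ)| ^ (pCrit n - 1) = 0 := by
      rw [abs_zero, Real.zero_rpow (by linarith)]
    have ht : Filter.Tendsto (fun x : ℝ => |x| ^ (pCrit n - 1)) (nhdsWithin 0 {(0:ℝ)}ᶜ)
        (nhds (|(0:ℝ)| ^ (pCrit n - 1))) := hc.tendsto.mono_left nhdsWithin_le_nhds
    rwa [h0] at ht

lemma fEps_odd (n : ℕ) (ε : ℝ) : fEps n ε = fun x => -(fEps n ε (-x)) := by
  funext x
  simp only [fEps, abs_neg]
  ring

/-- There exist `ε₀ > 0` and `C > 0` such that for every `ε ∈ (0, ε₀]` and every `u ∈ ℝ`,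
`|f_ε′(u)| ≤ C |u|^{p-1}`. -/
theorem deriv_fEps_bound (n : ℕ) (hn : 3 ≤ n) :
    ∃ ε₀ > (0 : ℝ), ∃ C > (0 : ℝ), ∀ ε : ℝ, 0 < ε → ε ≤ ε₀ → ∀ u : ℝ,
      |deriv (fEps n ε) u| ≤ C * |u| ^ (pCrit n - 1) := by
  have hp := one_lt_pCrit hn
  refine ⟨1, one_pos, pCrit n + 1, by linarith, ?_⟩
  intro ε hε hε1 u
  rcases lt_trichotomy u 0 with hu | hu | hu
  · have hder : deriv (fEps n ε) u = deriv (fEps n ε) (-u) := by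
      conv_lhs => rw [fEps_odd n ε]
      rw [deriv.fun_neg, deriv_comp_neg, neg_neg]
    rw [hder]
    have h := abs_deriv_fEps_le_pos hn hε hε1 (u := -u) (by linarith)
    rwa [abs_of_neg hu]
  · subst hu
    rw [(hasDerivAt_fEps_zero hn hε).deriv]
    simp [Real.zero_rpow (show pCrit n - 1 ≠ 0 by linarith)]
  · have h := abs_deriv_fEps_le_pos hn hε hε1 hu
    rwa [abs_of_pos hu]
end

section
/- For every integer n ≥ 3, one has ∫_{ℝ^n} (|y|² − 1) ln(1 + |y|²) / (1 + |y|²)^{n+1} dy = π^{n/2} Γ(n/2) / Γ(n+1); in particular this integral is strictly positive (so the constant a_4 in the reduced problem is positive). -/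
open Real MeasureTheory Set Filter Topology intervalIntegral

namespace A4aux

lemma real_beta {a b : ℝ} (ha : 0 < a) (hb : 0 < b) :
    ∫ x in (0:ℝ)..1, x ^ (a-1) * (1-x) ^ (b-1) =
      Real.Gamma a * Real.Gamma b / Real.Gamma (a+b) := by
  have key := Complex.Gamma_mul_Gamma_eq_betaIntegral (s := (a:ℂ)) (t := (b:ℂ))
    (by simpa using ha) (by simpa using hb)
  have hcast : Complex.betaIntegral (a:ℂ) (b:ℂ) =
      ((∫ x in (0:ℝ)..1, x ^ (a-1) * (1-x) ^ (b-1) : ℝ) : ℂ) := by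
    rw [Complex.betaIntegral, ← intervalIntegral.integral_ofReal]
    refine intervalIntegral.integral_congr fun x hx => ?_
    rw [Set.uIcc_of_le (by norm_num : (0:ℝ) ≤ 1)] at hx
    rw [Complex.ofReal_mul, Complex.ofReal_cpow hx.1,
      Complex.ofReal_cpow (by linarith [hx.2] : (0:ℝ) ≤ 1 - x)]
    push_cast
    ring
  rw [hcast, ← Complex.ofReal_add] at key
  rw [Complex.Gamma_ofReal, Complex.Gamma_ofReal, Complex.Gamma_ofReal] at key
  have h3 : Real.Gamma (a+b) ≠ 0 := (Real.Gamma_pos_of_pos (by linarith)).ne'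
  have : Real.Gamma a * Real.Gamma b =
      Real.Gamma (a+b) * ∫ x in (0:ℝ)..1, x ^ (a-1) * (1-x) ^ (b-1) := by
    exact_mod_cast key
  field_simp [h3]
  linarith [this]

variable (m : ℕ)

/-- the radial profile -/
noncomputable def f (r : ℝ) : ℝ :=
  (r ^ 2 - 1) * Real.log (1 + r ^ 2) / (1 + r ^ 2) ^ (m + 4)

/-- full radial integrand -/
noncomputable def g (r : ℝ) : ℝ := r ^ (m + 2) * f m r

/-- the auxiliary positive integrand -/
noncomputable def h (r : ℝ) : ℝ := r ^ (m + 4) / (1 + r ^ 2) ^ (m + 4)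

/-- antiderivative part -/
noncomputable def Φ (r : ℝ) : ℝ :=
  -(1 / (m + 3 : ℝ)) * (Real.log (1 + r ^ 2) * r ^ (m + 3) / (1 + r ^ 2) ^ (m + 3))

lemma one_add_sq_pos (r : ℝ) : (0:ℝ) < 1 + r ^ 2 := by positivity

lemma g_cont : Continuous (g m) := by
  unfold g f
  fun_prop (disch := intro r; positivity)

lemma h_cont : Continuous (h m) := by
  unfold h
  fun_prop (disch := intro r; positivity)

lemma hasDerivAt_Φ (r : ℝ) :
    HasDerivAt (Φ m) (g m r - (2 / (m + 3 : ℝ)) * h m r) r := by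
  have h0 : (0:ℝ) < 1 + r ^ 2 := one_add_sq_pos r
  have d1 : HasDerivAt (fun r : ℝ => 1 + r ^ 2) (2 * r) r := by
    simpa using ((hasDerivAt_pow 2 r).const_add 1)
  have dlog : HasDerivAt (fun r : ℝ => Real.log (1 + r ^ 2)) (2 * r / (1 + r ^ 2)) r :=
    d1.log h0.ne'
  have dnum : HasDerivAt (fun r : ℝ => Real.log (1 + r ^ 2) * r ^ (m + 3))
      (2 * r / (1 + r ^ 2) * r ^ (m + 3)
        + Real.log (1 + r ^ 2) * ((m + 3) * r ^ (m + 2))) r := by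
    simpa using dlog.fun_mul (hasDerivAt_pow (m + 3) r)
  have dden : HasDerivAt (fun r : ℝ => (1 + r ^ 2) ^ (m + 3))
      ((m + 3) * (1 + r ^ 2) ^ (m + 2) * (2 * r)) r := by
    simpa using d1.fun_pow (m + 3)
  have hden : ((1 + r ^ 2) ^ (m + 3) : ℝ) ≠ 0 := by positivity
  have := ((dnum.fun_div dden hden).const_mul (-(1 / (m + 3 : ℝ))))
  refine this.congr_deriv ?_
  unfold g f h
  field_simp
  ring

lemma hf_bound {r : ℝ} (hr : 1 ≤ r) : ‖g m r‖ ≤ (r ^ (m + 2))⁻¹ := by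
  have hr0 : (0:ℝ) < r := lt_of_lt_of_le one_pos hr
  have h0 : (0:ℝ) < 1 + r ^ 2 := one_add_sq_pos r
  have hlog0 : 0 ≤ Real.log (1 + r ^ 2) := Real.log_nonneg (by nlinarith)
  have hlog : Real.log (1 + r ^ 2) ≤ 1 + r ^ 2 := by
    have := Real.log_le_sub_one_of_pos h0
    linarith
  have hsq : (1:ℝ) ≤ r ^ 2 := by nlinarith
  unfold g f
  rw [Real.norm_eq_abs, abs_of_nonneg (by
    apply mul_nonneg (by positivity)
    apply div_nonneg _ (by positivity)
    exact mul_nonneg (by linarith) hlog0)]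
  rw [← mul_div_assoc, div_le_iff₀ (by positivity), inv_mul_eq_div, le_div_iff₀ (by positivity)]
  calc r ^ (m + 2) * ((r ^ 2 - 1) * Real.log (1 + r ^ 2)) * r ^ (m + 2)
      = (r ^ 2 - 1) * Real.log (1 + r ^ 2) * (r ^ 2) ^ (m + 2) := by ring
    _ ≤ (1 + r ^ 2) * (1 + r ^ 2) * (1 + r ^ 2) ^ (m + 2) := by
        refine mul_le_mul ?_ (pow_le_pow_left₀ (by positivity) (by linarith) _)
          (by positivity) (by positivity)
        nlinarith
    _ = (1 + r ^ 2) ^ (m + 4) := by ring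

lemma g_integrable : IntegrableOn (g m) (Ioi (0:ℝ)) := by
  have : Ioc (0:ℝ) 1 ∪ Ioi (1:ℝ) = Ioi 0 := Ioc_union_Ioi_eq_Ioi zero_le_one
  rw [← this]
  refine IntegrableOn.union ?_ ?_
  · exact (g_cont m).integrableOn_Ioc
  · refine Integrable.mono' ((integrableOn_Ioi_rpow_of_lt
      (show (-(m + 2 : ℝ)) < -1 by push_cast; linarith) one_pos))
      ((g_cont m).aestronglyMeasurable.restrict) ?_
    filter_upwards [ae_restrict_mem measurableSet_Ioi] with r hr
    have hr1 : (1:ℝ) < r := hr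
    have : (r:ℝ) ^ (-(m + 2 : ℝ)) = (r ^ (m + 2))⁻¹ := by
      rw [Real.rpow_neg (by linarith), ← Real.rpow_natCast r (m+2)]
      norm_num
    rw [this]
    exact hf_bound m hr1.le

lemma h_bound {r : ℝ} (hr : 1 ≤ r) : ‖h m r‖ ≤ (r ^ (m + 4))⁻¹ := by
  have hr0 : (0:ℝ) < r := lt_of_lt_of_le one_pos hr
  have h0 : (0:ℝ) < 1 + r ^ 2 := one_add_sq_pos r
  unfold h
  rw [Real.norm_eq_abs, abs_of_nonneg (by positivity),
    div_le_iff₀ (by positivity), inv_mul_eq_div, le_div_iff₀ (by positivity)]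
  calc r ^ (m + 4) * r ^ (m + 4) = (r ^ 2) ^ (m + 4) := by ring
    _ ≤ (1 + r ^ 2) ^ (m + 4) :=
        pow_le_pow_left₀ (by positivity) (by linarith) _

lemma h_integrable : IntegrableOn (h m) (Ioi (0:ℝ)) := by
  have : Ioc (0:ℝ) 1 ∪ Ioi (1:ℝ) = Ioi 0 := Ioc_union_Ioi_eq_Ioi zero_le_one
  rw [← this]
  refine IntegrableOn.union ?_ ?_
  · exact (h_cont m).integrableOn_Ioc
  · refine Integrable.mono' ((integrableOn_Ioi_rpow_of_lt
      (show (-(m + 4 : ℝ)) < -1 by push_cast; linarith) one_pos))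
      ((h_cont m).aestronglyMeasurable.restrict) ?_
    filter_upwards [ae_restrict_mem measurableSet_Ioi] with r hr
    have hr1 : (1:ℝ) < r := hr
    have : (r:ℝ) ^ (-(m + 4 : ℝ)) = (r ^ (m + 4))⁻¹ := by
      rw [Real.rpow_neg (by linarith), ← Real.rpow_natCast r (m+4)]
      norm_num
    rw [this]
    exact h_bound m hr1.le

lemma Φ_tendsto : Tendsto (Φ m) atTop (𝓝 0) := by
  apply squeeze_zero_norm' (f := Φ m) (a := fun r : ℝ => (r ^ (m + 1))⁻¹)
  · filter_upwards [eventually_ge_atTop (1:ℝ)] with r hr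
    have hr0 : (0:ℝ) < r := lt_of_lt_of_le one_pos hr
    have h0 : (0:ℝ) < 1 + r ^ 2 := one_add_sq_pos r
    have hlog0 : 0 ≤ Real.log (1 + r ^ 2) := Real.log_nonneg (by nlinarith)
    have hlog : Real.log (1 + r ^ 2) ≤ 1 + r ^ 2 := by
      have := Real.log_le_sub_one_of_pos h0
      linarith
    have hX0 : 0 ≤ Real.log (1 + r ^ 2) * r ^ (m + 3) / (1 + r ^ 2) ^ (m + 3) := by
      apply div_nonneg _ (by positivity)
      exact mul_nonneg hlog0 (by positivity)
    have hX : Real.log (1 + r ^ 2) * r ^ (m + 3) / (1 + r ^ 2) ^ (m + 3)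
        ≤ (r ^ (m + 1))⁻¹ := by
      rw [div_le_iff₀ (by positivity), inv_mul_eq_div, le_div_iff₀ (by positivity)]
      calc Real.log (1 + r ^ 2) * r ^ (m + 3) * r ^ (m + 1)
          = Real.log (1 + r ^ 2) * (r ^ 2) ^ (m + 2) := by ring
        _ ≤ (1 + r ^ 2) * (1 + r ^ 2) ^ (m + 2) :=
            mul_le_mul hlog (pow_le_pow_left₀ (by positivity) (by linarith) _)
              (by positivity) (by positivity)
        _ = (1 + r ^ 2) ^ (m + 3) := by ring
    unfold Φ
    rw [Real.norm_eq_abs, abs_mul, abs_of_nonpos (neg_nonpos.mpr (by positivity)), neg_neg,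
      abs_of_nonneg hX0]
    calc 1 / (m + 3 : ℝ) * (Real.log (1 + r ^ 2) * r ^ (m + 3) / (1 + r ^ 2) ^ (m + 3))
        ≤ 1 * (Real.log (1 + r ^ 2) * r ^ (m + 3) / (1 + r ^ 2) ^ (m + 3)) := by
          apply mul_le_mul_of_nonneg_right _ hX0
          rw [div_le_one (by positivity)]
          have : (0:ℝ) ≤ (m:ℝ) := Nat.cast_nonneg m
          linarith
      _ ≤ (r ^ (m + 1))⁻¹ := by rw [one_mul]; exact hX
  · exact (tendsto_pow_atTop (by omega : m + 1 ≠ 0)).inv_tendsto_atTop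


/-- beta-type integrand after substitution -/
noncomputable def gbeta (x : ℝ) : ℝ :=
  (1/2 : ℝ) * x ^ ((m + 3 : ℝ)/2) * (1 - x) ^ ((m + 3 : ℝ)/2 - 1)

lemma gbeta_cont : Continuous (gbeta m) := by
  unfold gbeta
  have hν : (0:ℝ) ≤ (m + 3 : ℝ)/2 := by positivity
  have hν1 : (0:ℝ) ≤ (m + 3 : ℝ)/2 - 1 := by
    have : (0:ℝ) ≤ (m:ℝ) := Nat.cast_nonneg m
    linarith
  exact (continuous_const.mul (Real.continuous_rpow_const hν)).mul
    ((Real.continuous_rpow_const hν1).comp (continuous_const.sub continuous_id))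

lemma hasDerivAt_phi (x : ℝ) :
    HasDerivAt (fun b : ℝ => b ^ 2 / (1 + b ^ 2)) (2 * x / (1 + x ^ 2) ^ 2) x := by
  have h0 : (0:ℝ) < 1 + x ^ 2 := one_add_sq_pos x
  have d1 : HasDerivAt (fun b : ℝ => 1 + b ^ 2) (2 * x) x := by
    simpa using ((hasDerivAt_pow 2 x).const_add 1)
  have := (hasDerivAt_pow 2 x).fun_div d1 h0.ne'
  refine this.congr_deriv ?_
  field_simp
  ring

lemma phi_tendsto : Tendsto (fun b : ℝ => b ^ 2 / (1 + b ^ 2)) atTop (𝓝 1) := by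
  have T : Tendsto (fun b : ℝ => 1 + b ^ 2) atTop atTop :=
    tendsto_atTop_add_const_left _ 1 (tendsto_pow_atTop two_ne_zero)
  have T2 : Tendsto (fun b : ℝ => 1 - (1 + b ^ 2)⁻¹) atTop (𝓝 (1 - 0)) :=
    tendsto_const_nhds.sub T.inv_tendsto_atTop
  rw [sub_zero] at T2
  refine T2.congr fun b => ?_
  have h0 : (1:ℝ) + b ^ 2 ≠ 0 := (one_add_sq_pos b).ne'
  field_simp
  ring

lemma subst_identity {x : ℝ} (hx : 0 ≤ x) :
    gbeta m (x ^ 2 / (1 + x ^ 2)) * (2 * x / (1 + x ^ 2) ^ 2) = h m x := by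
  rcases hx.eq_or_lt with rfl | hx0
  · simp [gbeta, h]
  have hc : (0:ℝ) < 1 + x ^ 2 := one_add_sq_pos x
  set ν : ℝ := (m + 3 : ℝ)/2 with hν
  have e2 : 1 - x ^ 2 / (1 + x ^ 2) = 1 / (1 + x ^ 2) := by field_simp; ring
  have e1a : ((x ^ 2 : ℝ)) ^ ν = x ^ (m + 3) := by
    rw [← Real.rpow_natCast x 2, ← Real.rpow_mul hx0.le, ← Real.rpow_natCast x (m + 3)]
    congr 1
    push_cast [hν]
    ring
  have e1 : (x ^ 2 / (1 + x ^ 2)) ^ ν = x ^ (m + 3) / (1 + x ^ 2) ^ ν := by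
    rw [Real.div_rpow (by positivity) hc.le, e1a]
  have key : (1 + x ^ 2) ^ ν * ((1 + x ^ 2) ^ (ν - 1) * (1 + x ^ 2) ^ 2) =
      (1 + x ^ 2) ^ (m + 4) := by
    rw [← Real.rpow_natCast (1 + x ^ 2) 2, ← Real.rpow_add hc, ← Real.rpow_add hc,
      ← Real.rpow_natCast (1 + x ^ 2) (m + 4)]
    congr 1
    push_cast [hν]
    ring
  have hν0 : ((1 + x ^ 2 : ℝ)) ^ ν ≠ 0 := (Real.rpow_pos_of_pos hc ν).ne'
  have hν1 : ((1 + x ^ 2 : ℝ)) ^ (ν - 1) ≠ 0 := (Real.rpow_pos_of_pos hc (ν - 1)).ne'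
  unfold gbeta h
  rw [e2, e1, show (1:ℝ)/(1 + x ^ 2) = (1 + x ^ 2)⁻¹ from one_div _,
    Real.inv_rpow hc.le]
  rw [eq_div_iff (by positivity : ((1 + x ^ 2 : ℝ)) ^ (m + 4) ≠ 0), ← key]
  field_simp
  rw [hν]
  ring_nf

lemma h_integral_eq_beta :
    ∫ r in Ioi (0:ℝ), h m r = ∫ x in (0:ℝ)..1, gbeta m x := by
  have L1 : Tendsto (fun b => ∫ x in (0:ℝ)..b, h m x) atTop
      (𝓝 (∫ r in Ioi (0:ℝ), h m r)) :=
    intervalIntegral_tendsto_integral_Ioi 0 (h_integrable m) tendsto_id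
  have P : Continuous fun c : ℝ => ∫ x in (0:ℝ)..c, gbeta m x :=
    intervalIntegral.continuous_primitive
      (fun a b => (gbeta_cont m).intervalIntegrable a b) 0
  have L2 : Tendsto (fun b : ℝ => ∫ x in (0:ℝ)..(b ^ 2 / (1 + b ^ 2)), gbeta m x) atTop
      (𝓝 (∫ x in (0:ℝ)..1, gbeta m x)) := (P.tendsto 1).comp (phi_tendsto)
  have E : (fun b : ℝ => ∫ x in (0:ℝ)..(b ^ 2 / (1 + b ^ 2)), gbeta m x)
      =ᶠ[atTop] fun b => ∫ x in (0:ℝ)..b, h m x := by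
    filter_upwards [eventually_ge_atTop (0:ℝ)] with b hb
    have hsub : ∫ x in (0:ℝ)..b, (gbeta m ∘ fun y : ℝ => y ^ 2 / (1 + y ^ 2)) x *
        (2 * x / (1 + x ^ 2) ^ 2) = ∫ x in ((0:ℝ) ^ 2 / (1 + (0:ℝ) ^ 2))..(b ^ 2 / (1 + b ^ 2)),
          gbeta m x :=
      intervalIntegral.integral_comp_mul_deriv
        (fun x _ => hasDerivAt_phi x)
        ((Continuous.div (by fun_prop) (by fun_prop)
          (fun x => by positivity)).continuousOn)
        (gbeta_cont m)
    simp only [ne_eq, OfNat.ofNat_ne_zero, not_false_eq_true, zero_pow, zero_div, zero_add,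
      div_one] at hsub
    rw [← hsub]
    refine intervalIntegral.integral_congr fun x hx => ?_
    rw [Set.uIcc_of_le hb] at hx
    simp only [Function.comp_apply]
    exact subst_identity m hx.1
  exact tendsto_nhds_unique L1 (Tendsto.congr' E L2)

lemma gbeta_integral :
    ∫ x in (0:ℝ)..1, gbeta m x =
      Real.Gamma ((m + 3 : ℝ)/2 + 1) * Real.Gamma ((m + 3 : ℝ)/2) /
        (2 * Real.Gamma ((m : ℝ) + 4)) := by
  have hm : (0:ℝ) ≤ (m:ℝ) := Nat.cast_nonneg m
  have hb := real_beta (a := (m + 3 : ℝ)/2 + 1) (b := (m + 3 : ℝ)/2)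
    (by linarith) (by linarith)
  rw [add_sub_cancel_right] at hb
  have harg : (m + 3 : ℝ)/2 + 1 + (m + 3 : ℝ)/2 = (m : ℝ) + 4 := by ring
  rw [harg] at hb
  unfold gbeta
  simp only [mul_assoc]
  rw [intervalIntegral.integral_const_mul, hb]
  ring


lemma g_integral_eq :
    ∫ r in Ioi (0:ℝ), g m r = (2 / (m + 3 : ℝ)) * ∫ r in Ioi (0:ℝ), h m r := by
  have hint : IntegrableOn (fun r => (2 / (m + 3 : ℝ)) * h m r) (Ioi (0:ℝ)) :=
    (h_integrable m).const_mul _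
  have hsub : ∫ r in Ioi (0:ℝ), (g m r - (2 / (m + 3 : ℝ)) * h m r) = 0 - Φ m 0 :=
    integral_Ioi_of_hasDerivAt_of_tendsto
      ((hasDerivAt_Φ m 0).continuousAt.continuousWithinAt)
      (fun x _ => hasDerivAt_Φ m x)
      ((g_integrable m).sub hint)
      (Φ_tendsto m)
  have hΦ0 : Φ m 0 = 0 := by simp [Φ]
  rw [integral_sub (g_integrable m) hint, MeasureTheory.integral_const_mul, hΦ0] at hsub
  linarith

lemma sqrt_pi_pow : Real.sqrt π ^ (m + 3) = π ^ (((m:ℝ) + 3)/2) := by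
  rw [Real.sqrt_eq_rpow, ← Real.rpow_natCast (π ^ ((1:ℝ)/2)) (m + 3),
    ← Real.rpow_mul pi_pos.le]
  congr 1
  push_cast
  ring

end A4aux

open A4aux in
/-- For every integer `n ≥ 3`,
`∫_{ℝ^n} (|y|² - 1) ln(1+|y|²)/(1+|y|²)^{n+1} dy = π^{n/2} Γ(n/2)/Γ(n+1)`,
and in particular this integral is strictly positive (so the constant `a₄` in the reduced
problem is positive). -/
theorem integral_log_weight_eq_gamma (n : ℕ) (hn : 3 ≤ n) :
    (∫ y : EuclideanSpace ℝ (Fin n),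
        (‖y‖ ^ 2 - 1) * Real.log (1 + ‖y‖ ^ 2) / (1 + ‖y‖ ^ 2) ^ (n + 1) =
      Real.pi ^ ((n : ℝ) / 2) * Real.Gamma ((n : ℝ) / 2) / Real.Gamma ((n : ℝ) + 1)) ∧
    0 < ∫ y : EuclideanSpace ℝ (Fin n),
        (‖y‖ ^ 2 - 1) * Real.log (1 + ‖y‖ ^ 2) / (1 + ‖y‖ ^ 2) ^ (n + 1) := by
  obtain ⟨m, rfl⟩ : ∃ m, n = m + 3 := ⟨n - 3, by omega⟩
  have hmpos : (0:ℝ) < (m:ℝ) + 3 := by positivity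
  have hν : (0:ℝ) < ((m:ℝ) + 3)/2 := by positivity
  have hΓν : 0 < Real.Gamma (((m:ℝ) + 3)/2) := Real.Gamma_pos_of_pos hν
  have hΓν1 : 0 < Real.Gamma (((m:ℝ) + 3)/2 + 1) := Real.Gamma_pos_of_pos (by linarith)
  have hΓ4 : 0 < Real.Gamma ((m:ℝ) + 4) := Real.Gamma_pos_of_pos (by linarith)
  have heq : ∫ y : EuclideanSpace ℝ (Fin (m + 3)),
      (‖y‖ ^ 2 - 1) * Real.log (1 + ‖y‖ ^ 2) / (1 + ‖y‖ ^ 2) ^ (m + 3 + 1) =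
      π ^ (((m + 3 : ℕ) : ℝ) / 2) * Real.Gamma (((m + 3 : ℕ) : ℝ) / 2) /
        Real.Gamma (((m + 3 : ℕ) : ℝ) + 1) := by
    have step1 := MeasureTheory.integral_fun_norm_addHaar
      (volume : Measure (EuclideanSpace ℝ (Fin (m + 3)))) (f m)
    rw [finrank_euclideanSpace_fin] at step1
    have hV : (volume (Metric.ball (0 : EuclideanSpace ℝ (Fin (m + 3))) 1)).toReal =
        Real.sqrt π ^ (m + 3) / Real.Gamma (((m:ℝ) + 3)/2 + 1) := by
      rw [EuclideanSpace.volume_ball]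
      simp only [Fintype.card_fin, ENNReal.ofReal_one, one_pow, one_mul]
      rw [ENNReal.toReal_ofReal (by positivity)]
      norm_num
    have hJ : ∫ r in Set.Ioi (0:ℝ), r ^ (m + 3 - 1) • f m r =
        (2 / ((m:ℝ) + 3)) * ∫ r in Set.Ioi (0:ℝ), h m r := by
      rw [← g_integral_eq]
      refine setIntegral_congr_fun measurableSet_Ioi fun r _ => ?_
      simp [g, smul_eq_mul]
    calc ∫ y : EuclideanSpace ℝ (Fin (m + 3)),
          (‖y‖ ^ 2 - 1) * Real.log (1 + ‖y‖ ^ 2) / (1 + ‖y‖ ^ 2) ^ (m + 3 + 1)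
        = ∫ y : EuclideanSpace ℝ (Fin (m + 3)), f m ‖y‖ := by rfl
      _ = (m + 3) • (volume (Metric.ball (0 : EuclideanSpace ℝ (Fin (m + 3))) 1)).toReal •
            ∫ r in Set.Ioi (0:ℝ), r ^ (m + 3 - 1) • f m r := step1
      _ = ((m:ℝ) + 3) * ((Real.sqrt π ^ (m + 3) / Real.Gamma (((m:ℝ) + 3)/2 + 1)) *
            ((2 / ((m:ℝ) + 3)) * ∫ r in Set.Ioi (0:ℝ), h m r)) := by
          rw [hV, hJ, nsmul_eq_mul, smul_eq_mul]
          push_cast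
          ring
      _ = π ^ (((m + 3 : ℕ) : ℝ) / 2) * Real.Gamma (((m + 3 : ℕ) : ℝ) / 2) /
            Real.Gamma (((m + 3 : ℕ) : ℝ) + 1) := by
          rw [h_integral_eq_beta, gbeta_integral, sqrt_pi_pow]
          push_cast
          rw [show ((m:ℝ) + 3 + 1) = (m:ℝ) + 4 by ring]
          field_simp
  refine ⟨heq, heq ▸ ?_⟩
  have hc : (0:ℝ) < ((m + 3 : ℕ) : ℝ) := by exact_mod_cast Nat.succ_pos _
  exact div_pos (mul_pos (Real.rpow_pos_of_pos pi_pos _)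
      (Real.Gamma_pos_of_pos (by linarith)))
    (Real.Gamma_pos_of_pos (by linarith))
end
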